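/- Every undecodable erasure set of size 6 in the grid peeling model either has all its cells contained in 3 rows and 3 columns, or contains a 4-cell rectangle (two rows, two columns with all four intersections) as a subset. -/
import Mathlib


/-- A cell `c` of an erasure pattern `E` is peelable if it belongs to `E` and is the
unique cell of `E` in its row, or the unique cell of `E` in its column. -/
def Peelable {α β : Type*} [DecidableEq α] [DecidableEq β]
    (E : Finset (α × β)) (c : α × β) : Prop :=
  c ∈ E ∧ ((∀ d ∈ E, d.1 = c.1 → d = c) ∨ (∀ d ∈ E, d.2 = c.2 → d = c))

/-- An erasure pattern is decodable if iterated peeling empties it. -/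
inductive PeelDecodable {α β : Type*} [DecidableEq α] [DecidableEq β] :
    Finset (α × β) → Prop
  | empty : PeelDecodable ∅
  | peel (E : Finset (α × β)) (c : α × β) :
      Peelable E c → PeelDecodable (E.erase c) → PeelDecodable E

/-- A 4-set of cells forming the corners of a combinatorial rectangle. -/
def IsRectangle {α β : Type*} [DecidableEq α] [DecidableEq β]
    (E : Finset (α × β)) : Prop :=
  ∃ i₁ i₂ : α, ∃ j₁ j₂ : β, i₁ ≠ i₂ ∧ j₁ ≠ j₂ ∧
    E = {(i₁, j₁), (i₁, j₂), (i₂, j₁), (i₂, j₂)}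

lemma exists_stopping {α β : Type*} [DecidableEq α] [DecidableEq β]
    (E : Finset (α × β)) (hne : E.Nonempty) (h : ¬ PeelDecodable E) :
    ∃ S, S ⊆ E ∧ S.Nonempty ∧ ∀ c ∈ S, ¬ Peelable S c := by
  classical
  induction E using Finset.strongInductionOn with
  | _ E ih =>
    by_cases hp : ∃ c, Peelable E c
    · obtain ⟨c, hc⟩ := hp
      have herase : ¬ PeelDecodable (E.erase c) := fun hd => h (PeelDecodable.peel E c hc hd)
      have hne' : (E.erase c).Nonempty := by
        rcases Finset.eq_empty_or_nonempty (E.erase c) with he | he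
        · exact absurd (he ▸ PeelDecodable.empty) herase
        · exact he
      obtain ⟨S, hS1, hS2, hS3⟩ := ih (E.erase c) (Finset.erase_ssubset hc.1) hne' herase
      exact ⟨S, hS1.trans (Finset.erase_subset _ _), hS2, hS3⟩
    · exact ⟨E, Finset.Subset.refl _, hne, fun c _ hc => hp ⟨c, hc⟩⟩

/-- Every undecodable erasure set of size 6 either is contained in 3 rows and
3 columns, or contains a 4-cell rectangle as a subset. -/
theorem undecodable_six_structure (LA LB : ℕ)
    (E : Finset (Fin (LA + 1) × Fin (LB + 1))) (hE : E.card = 6)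
    (hund : ¬ PeelDecodable E) :
    (∃ (rows : Finset (Fin (LA + 1))) (cols : Finset (Fin (LB + 1))),
        rows.card ≤ 3 ∧ cols.card ≤ 3 ∧ ∀ c ∈ E, c.1 ∈ rows ∧ c.2 ∈ cols) ∨
      ∃ F ⊆ E, IsRectangle F := by
  classical
  have hne : E.Nonempty := Finset.card_pos.mp (by omega)
  obtain ⟨S, hSE, hSne, hstop⟩ := exists_stopping E hne hund
  -- each cell has a mate in its row and in its column
  have hmate : ∀ c ∈ S, (∃ d ∈ S, d.1 = c.1 ∧ d ≠ c) ∧ (∃ d ∈ S, d.2 = c.2 ∧ d ≠ c) := by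
    intro c hc
    have := hstop c hc
    unfold Peelable at this
    push_neg at this
    obtain ⟨h1, h2⟩ := this hc
    obtain ⟨d1, hd1, hd1', hd1''⟩ := h1
    obtain ⟨d2, hd2, hd2', hd2''⟩ := h2
    exact ⟨⟨d1, hd1, hd1', hd1''⟩, ⟨d2, hd2, hd2', hd2''⟩⟩
  set R := S.image Prod.fst with hR
  set C := S.image Prod.snd with hC
  -- fibers have ≥ 2 elements
  have hrowfib : ∀ i ∈ R, 2 ≤ (S.filter fun c => c.1 = i).card := by
    intro i hi
    obtain ⟨c, hc, hci⟩ := Finset.mem_image.mp hi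
    obtain ⟨⟨d, hd, hd1, hdne⟩, -⟩ := hmate c hc
    refine Finset.one_lt_card.mpr ⟨c, ?_, d, ?_, fun h => hdne h.symm⟩
    · exact Finset.mem_filter.mpr ⟨hc, hci⟩
    · exact Finset.mem_filter.mpr ⟨hd, by rw [hd1, hci]⟩
  have hcolfib : ∀ j ∈ C, 2 ≤ (S.filter fun c => c.2 = j).card := by
    intro j hj
    obtain ⟨c, hc, hcj⟩ := Finset.mem_image.mp hj
    obtain ⟨-, ⟨d, hd, hd2, hdne⟩⟩ := hmate c hc
    refine Finset.one_lt_card.mpr ⟨c, ?_, d, ?_, fun h => hdne h.symm⟩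
    · exact Finset.mem_filter.mpr ⟨hc, hcj⟩
    · exact Finset.mem_filter.mpr ⟨hd, by rw [hd2, hcj]⟩
  have hcardR : 2 * R.card ≤ S.card := by
    have h1 : S.card = ∑ i ∈ R, (S.filter fun c => c.1 = i).card :=
      Finset.card_eq_sum_card_fiberwise (fun c hc => Finset.mem_image_of_mem _ hc)
    calc 2 * R.card = ∑ _i ∈ R, 2 := by rw [Finset.sum_const, smul_eq_mul, mul_comm]
    _ ≤ ∑ i ∈ R, (S.filter fun c => c.1 = i).card := Finset.sum_le_sum hrowfib
    _ = S.card := h1.symm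
  have hcardC : 2 * C.card ≤ S.card := by
    have h1 : S.card = ∑ j ∈ C, (S.filter fun c => c.2 = j).card :=
      Finset.card_eq_sum_card_fiberwise (fun c hc => Finset.mem_image_of_mem _ hc)
    calc 2 * C.card = ∑ _j ∈ C, 2 := by rw [Finset.sum_const, smul_eq_mul, mul_comm]
    _ ≤ ∑ j ∈ C, (S.filter fun c => c.2 = j).card := Finset.sum_le_sum hcolfib
    _ = S.card := h1.symm
  have hR2 : 2 ≤ R.card := by
    obtain ⟨c, hc⟩ := hSne
    obtain ⟨-, ⟨d, hd, hd2, hdne⟩⟩ := hmate c hc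
    have hne1 : d.1 ≠ c.1 := fun h => hdne (Prod.ext h hd2)
    exact Finset.one_lt_card.mpr ⟨d.1, Finset.mem_image_of_mem _ hd,
      c.1, Finset.mem_image_of_mem _ hc, hne1⟩
  have hC2 : 2 ≤ C.card := by
    obtain ⟨c, hc⟩ := hSne
    obtain ⟨⟨d, hd, hd1, hdne⟩, -⟩ := hmate c hc
    have hne2 : d.2 ≠ c.2 := fun h => hdne (Prod.ext hd1 h)
    exact Finset.one_lt_card.mpr ⟨d.2, Finset.mem_image_of_mem _ hd,
      c.2, Finset.mem_image_of_mem _ hc, hne2⟩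
  have hScard : S.card ≤ 6 := hE ▸ Finset.card_le_card hSE
  have hSsub : S ⊆ R ×ˢ C := fun c hc =>
    Finset.mem_product.mpr ⟨Finset.mem_image_of_mem _ hc, Finset.mem_image_of_mem _ hc⟩
  rcases le_or_gt S.card 5 with h5 | h5
  · -- rectangle case
    right
    have hRle : R.card ≤ 2 := by omega
    have hCle : C.card ≤ 2 := by omega
    have hRC : (R ×ˢ C).card ≤ 4 := by
      rw [Finset.card_product]; nlinarith
    have hSeq : S = R ×ˢ C :=
      Finset.eq_of_subset_of_card_le hSsub (by omega)
    have hRe : R.card = 2 := by omega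
    have hCe : C.card = 2 := by
      have := hSeq ▸ hScard
      have h4 : 4 ≤ S.card := by omega
      omega
    obtain ⟨i₁, i₂, hi, hReq⟩ := Finset.card_eq_two.mp hRe
    obtain ⟨j₁, j₂, hj, hCeq⟩ := Finset.card_eq_two.mp hCe
    refine ⟨S, hSE, i₁, i₂, j₁, j₂, hi, hj, ?_⟩
    rw [hSeq, hReq, hCeq]
    ext ⟨a, b⟩
    simp [Finset.mem_product, Prod.ext_iff]
    tauto
  · -- S = E case
    left
    have hSeq : S = E := Finset.eq_of_subset_of_card_le hSE (by omega)
    refine ⟨R, C, by omega, by omega, fun c hc => ?_⟩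
    rw [← hSeq] at hc
    exact ⟨Finset.mem_image_of_mem _ hc, Finset.mem_image_of_mem _ hc⟩
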